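/- arXiv:2409.09313 — 4 statements merged into one kernel-verified Lean document; each statement's English description precedes it below -/
import Mathlib

section
/- The trifocal tensor of three cameras admits the explicit trilinear expansion T(A,B,C)_{wqr} = Σ_{s=1}^{6} S(A)_{ws} Σ_{v=1}^{4} B_{qv} Σ_{u=1}^{4} C_{ru} G_{svu}, where S(A) is the line projection matrix of A and G is the fixed 6×4×4 core tensor whose only nonzero entries encode signed 2×2 antisymmetrizers. -/
noncomputable def trifocal (A B C : Matrix (Fin 3) (Fin 4) ℝ) (w q r : Fin 3) : ℝ :=
  (-1 : ℝ) ^ (w : ℕ) *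
    Matrix.det (Matrix.of ![A (w.succAbove 0), A (w.succAbove 1), B q, C r])

def pairs : Fin 6 → Fin 4 × Fin 4 := ![(0,1),(0,2),(0,3),(1,2),(1,3),(2,3)]

noncomputable def lineProj (A : Matrix (Fin 3) (Fin 4) ℝ) : Matrix (Fin 3) (Fin 6) ℝ :=
  fun w s => (-1 : ℝ) ^ (w : ℕ) *
    (A (w.succAbove 0) (pairs s).1 * A (w.succAbove 1) (pairs s).2
      - A (w.succAbove 0) (pairs s).2 * A (w.succAbove 1) (pairs s).1)

noncomputable def coreG : Fin 6 → Fin 4 → Fin 4 → ℝ :=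
  ![![![0,0,0,0], ![0,0,0,0], ![0,0,0,1], ![0,0,-1,0]],
    ![![0,0,0,0], ![0,0,0,-1], ![0,0,0,0], ![0,1,0,0]],
    ![![0,0,0,0], ![0,0,1,0], ![0,-1,0,0], ![0,0,0,0]],
    ![![0,0,0,1], ![0,0,0,0], ![0,0,0,0], ![-1,0,0,0]],
    ![![0,0,-1,0], ![0,0,0,0], ![1,0,0,0], ![0,0,0,0]],
    ![![0,1,0,0], ![-1,0,0,0], ![0,0,0,0], ![0,0,0,0]]]

lemma key (a b c d : Fin 4 → ℝ) :
    Matrix.det (Matrix.of ![a, b, c, d]) =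
      ∑ s : Fin 6, (a (pairs s).1 * b (pairs s).2 - a (pairs s).2 * b (pairs s).1) *
        ∑ v : Fin 4, c v * ∑ u : Fin 4, d u * coreG s v u := by
  simp only [Matrix.det_succ_row_zero, Matrix.det_fin_three, pairs, coreG,
    Fin.sum_univ_succ, Fin.sum_univ_zero, Matrix.cons_val_zero, Matrix.cons_val_one,
    Matrix.head_cons, Matrix.of_apply, Matrix.cons_val', Matrix.empty_val',
    Matrix.cons_val_fin_one, Matrix.submatrix_apply, Matrix.cons_val_succ,
    Matrix.tail_cons, Fin.succAbove_zero, Fin.isValue]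
  norm_num [Fin.succAbove, Fin.lt_def]
  simp only [show (Fin.succ 2 : Fin 4) = 3 from rfl, show (Fin.castSucc 2 : Fin 4) = 2 from rfl]
  ring

theorem stmt3 (A B C : Matrix (Fin 3) (Fin 4) ℝ) (w q r : Fin 3) :
    trifocal A B C w q r =
      ∑ s : Fin 6, lineProj A w s * ∑ v : Fin 4, B q v * ∑ u : Fin 4, C r u * coreG s v u := by
  unfold trifocal lineProj
  rw [key, Finset.mul_sum]
  exact Finset.sum_congr rfl fun s _ => by ring
end

section
/- The block trifocal tensor of n cameras equals the Tucker product G ×₁ 𝒫 ×₂ 𝒞 ×₃ 𝒞, where 𝒫 ∈ ℝ^{3n×6} stacks the line projection matrices of the cameras, 𝒞 ∈ ℝ^{3n×4} stacks the camera matrices, and G is the fixed 6×4×4 core tensor. -/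
theorem stmt4 (n : ℕ) (P : Fin n → Matrix (Fin 3) (Fin 4) ℝ)
    (i j k : Fin n) (w q r : Fin 3) :
    trifocal (P i) (P j) (P k) w q r =
      ∑ s : Fin 6, ∑ v : Fin 4, ∑ u : Fin 4,
        coreG s v u * lineProj (P i) w s * P j q v * P k r u := by
  fin_cases w <;>
  · set_option maxHeartbeats 4000000 in
    simp only [trifocal, lineProj, coreG, pairs, Fin.sum_univ_succ, Fin.sum_univ_zero,
      Matrix.det_succ_row_zero, Fin.succAbove, Matrix.of_apply, Matrix.cons_val',
      Matrix.cons_val_zero, Matrix.cons_val_one, Matrix.head_cons, Matrix.empty_val',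
      Matrix.cons_val_fin_one, Matrix.head_fin_const, Matrix.cons_val_succ,
      Matrix.submatrix_apply, Matrix.det_fin_one, Matrix.det_unique]
    norm_num [Fin.lt_def, Fin.ext_iff, show ((3:Fin 4):ℕ) = 3 from rfl, show Fin.succ (2:Fin 3) = (3:Fin 4) from rfl,
      show Fin.castSucc (2:Fin 3) = (2:Fin 4) from rfl,
      show Fin.succ (1:Fin 3) = (2:Fin 4) from rfl,
      show Fin.succ (0:Fin 3) = (1:Fin 4) from rfl,
      show Fin.castSucc (1:Fin 3) = (1:Fin 4) from rfl,
      show Fin.castSucc (0:Fin 3) = (0:Fin 4) from rfl]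
    ring
end

section
/- For distinct q, r ∈ {1,2,3} with m the remaining index, (T^n_{jii})_{wqr} = ε·(−1)^{w+1} det[∼P_j^w; ∼P_i^m], where ε = +1 if (q,r) is a cyclic rearrangement of the order omitting m appropriately and ε = −1 otherwise; i.e., the off-diagonal entries of the (j,i,i) block equal entries of the 4×4 determinant det[∼P_j^w; ∼P_i^m] up to sign, which is the bilinear expression defining the fundamental matrix entry (F_{ji})_{mw}. -/
lemma swap34 (a b c d : Fin 4 → ℝ) :
    Matrix.det (Matrix.of ![a, b, c, d]) = -Matrix.det (Matrix.of ![a, b, d, c]) := by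
  have := Matrix.det_permute (Equiv.swap (2:Fin 4) 3) (Matrix.of ![a, b, d, c])
  rw [show ((Matrix.of ![a, b, d, c]).submatrix (Equiv.swap (2:Fin 4) 3) id) =
      Matrix.of ![a, b, c, d] from by
    ext i j; fin_cases i <;> fin_cases j <;> rfl] at this
  rw [this]; simp

theorem stmt10 (Pi Pj : Matrix (Fin 3) (Fin 4) ℝ)
    (w q r m : Fin 3) (hqr : q ≠ r) (hmq : m ≠ q) (hmr : m ≠ r) :
    trifocal Pj Pi Pi w q r =
      (if q = m.succAbove 0 then (1 : ℝ) else -1) *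
        ((-1 : ℝ) ^ (w : ℕ) * Matrix.det (Matrix.of
          ![Pj (w.succAbove 0), Pj (w.succAbove 1),
            Pi (m.succAbove 0), Pi (m.succAbove 1)])) := by
  unfold trifocal
  fin_cases q <;> fin_cases r <;> fin_cases m <;> simp_all [Fin.succAbove] <;>
    rw [swap34] <;> ring
end

section
/- Let λ : {1,…,n}³ → ℝ satisfy: λ_{ii1} = λ_{1ii}, λ_{i1i} = λ_{1ii}, λ_{ji1} = λ_{1ij}, λ_{i1j} = λ_{1ij}, λ_{ji1} = λ_{1ik}, λ_{i1j} = λ_{1kj}, and λ_{ji1} = λ_{1ii} for all pairwise distinct i,j,k ∈ {2,…,n} with n ≥ 4, and λ_{i11} = λ_{1j1} = λ_{11k} = 1. Then all values λ_{ijk} with exactly one index equal to 1 coincide, equal to some constant c. -/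
theorem stmt15 (n : ℕ) (hn : 4 ≤ n) (o : Fin n) (ho : (o : ℕ) = 0)
    (lam : Fin n → Fin n → Fin n → ℝ)
    (h1 : ∀ i j k : Fin n, i ≠ o → j ≠ o → k ≠ o → i ≠ j → i ≠ k → j ≠ k →
      lam i i o = lam o i i ∧ lam i o i = lam o i i ∧
      lam j i o = lam o i j ∧ lam i o j = lam o i j ∧
      lam j i o = lam o i k ∧ lam i o j = lam o k j ∧
      lam j i o = lam o i i)
    (h2 : ∀ i : Fin n, i ≠ o → lam i o o = 1 ∧ lam o i o = 1 ∧ lam o o i = 1) :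
    ∃ c : ℝ, ∀ i j k : Fin n,
      ((i = o ∧ j ≠ o ∧ k ≠ o) ∨ (i ≠ o ∧ j = o ∧ k ≠ o) ∨ (i ≠ o ∧ j ≠ o ∧ k = o)) →
      lam i j k = c := by
  -- there is always a fresh index distinct from any two given ones and from o
  have hk3 : ∀ i j : Fin n, ∃ k : Fin n, k ≠ o ∧ k ≠ i ∧ k ≠ j := by
    intro i j
    have hcard : ({o, i, j} : Finset (Fin n)).card ≤ 3 := by
      calc ({o, i, j} : Finset (Fin n)).card
          ≤ ({i, j} : Finset (Fin n)).card + 1 := Finset.card_insert_le _ _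
        _ ≤ (({j} : Finset (Fin n)).card + 1) + 1 :=
            Nat.add_le_add_right (Finset.card_insert_le _ _) 1
        _ ≤ 3 := by simp
    have hne : (({o, i, j}ᶜ : Finset (Fin n))).Nonempty := by
      rw [← Finset.card_pos, Finset.card_compl]
      simp only [Fintype.card_fin]
      omega
    obtain ⟨k, hk⟩ := hne
    simp only [Finset.mem_compl, Finset.mem_insert, Finset.mem_singleton, not_or] at hk
    exact ⟨k, hk.1, hk.2.1, hk.2.2⟩
  -- second-index transfer
  have S1 : ∀ i j k : Fin n, i ≠ o → j ≠ o → k ≠ o → i ≠ j → i ≠ k → j ≠ k →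
      lam o i j = lam o i k := by
    intro i j k hi hj hk hij hik hjk
    obtain ⟨_, _, h3, _, h5, _, _⟩ := h1 i j k hi hj hk hij hik hjk
    rw [← h3, h5]
  -- first-index transfer
  have S2 : ∀ i j k : Fin n, i ≠ o → j ≠ o → k ≠ o → i ≠ j → i ≠ k → j ≠ k →
      lam o i j = lam o k j := by
    intro i j k hi hj hk hij hik hjk
    obtain ⟨_, _, _, h4, _, h6, _⟩ := h1 i j k hi hj hk hij hik hjk
    rw [← h4, h6]
  -- off-diagonal equals diagonal
  have G : ∀ i j : Fin n, i ≠ o → j ≠ o → i ≠ j → lam o i j = lam o i i := by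
    intro i j hi hj hij
    obtain ⟨k, hk, hki, hkj⟩ := hk3 i j
    obtain ⟨_, _, h3, _, _, _, h7⟩ := h1 i j k hi hj hk hij (Ne.symm hki) (Ne.symm hkj)
    rw [← h3, h7]
  -- symmetry of off-diagonal
  have Sym : ∀ i j : Fin n, i ≠ o → j ≠ o → i ≠ j → lam o i j = lam o j i := by
    intro i j hi hj hij
    obtain ⟨k, hk, hki, hkj⟩ := hk3 i j
    have e1 : lam o i j = lam o i k := S1 i j k hi hj hk hij (Ne.symm hki) (Ne.symm hkj)
    have e2 : lam o i k = lam o j k :=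
      S2 i k j hi hk hj (Ne.symm hki) hij.symm.symm hkj
    have e3 : lam o j k = lam o j i := S1 j k i hj hk hi (Ne.symm hkj) hij.symm hki
    rw [e1, e2, e3]
  -- all diagonal values agree
  have D : ∀ i j : Fin n, i ≠ o → j ≠ o → lam o i i = lam o j j := by
    intro i j hi hj
    by_cases hij : i = j
    · rw [hij]
    · have := G i j hi hj hij
      have h2' := Sym i j hi hj hij
      have h3' := G j i hj hi (Ne.symm hij)
      rw [← this, h2', h3']
  -- the canonical element and constant
  have h1n : (1 : ℕ) < n := by omega
  set a : Fin n := ⟨1, h1n⟩ with ha_def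
  have ha : a ≠ o := by
    intro h
    have : (a : ℕ) = (o : ℕ) := by rw [h]
    simp [ha_def, ho] at this
  refine ⟨lam o a a, ?_⟩
  have All : ∀ i j : Fin n, i ≠ o → j ≠ o → lam o i j = lam o a a := by
    intro i j hi hj
    by_cases hij : i = j
    · subst hij; exact D i a hi ha
    · rw [G i j hi hj hij]; exact D i a hi ha
  intro i j k hcase
  rcases hcase with ⟨hi, hj, hk⟩ | ⟨hi, hj, hk⟩ | ⟨hi, hj, hk⟩
  · subst hi; exact All j k hj hk
  · -- lam i o k
    subst hj
    by_cases hik : i = k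
    · subst hik
      obtain ⟨j', hj'o, hj'i, _⟩ := hk3 i i
      obtain ⟨k', hk'o, hk'i, hk'j'⟩ := hk3 i j'
      obtain ⟨_, hb, _, _, _, _, _⟩ :=
        h1 i j' k' hi hj'o hk'o (Ne.symm hj'i) (Ne.symm hk'i) (Ne.symm hk'j')
      rw [hb]; exact All i i hi hi
    · obtain ⟨k', hk'o, hk'i, hk'k⟩ := hk3 i k
      obtain ⟨_, _, _, hd, _, _, _⟩ :=
        h1 i k k' hi hk hk'o hik (Ne.symm hk'i) (Ne.symm hk'k)
      rw [hd]; exact All i k hi hk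
  · -- lam i j o
    subst hk
    by_cases hij : i = j
    · subst hij
      obtain ⟨j', hj'o, hj'i, _⟩ := hk3 i i
      obtain ⟨k', hk'o, hk'i, hk'j'⟩ := hk3 i j'
      obtain ⟨haa, _, _, _, _, _, _⟩ :=
        h1 i j' k' hi hj'o hk'o (Ne.symm hj'i) (Ne.symm hk'i) (Ne.symm hk'j')
      rw [haa]; exact All i i hi hi
    · obtain ⟨k', hk'o, hk'j, hk'i⟩ := hk3 j i
      obtain ⟨_, _, hc, _, _, _, _⟩ :=
        h1 j i k' hj hi hk'o (Ne.symm hij) (Ne.symm hk'j) (Ne.symm hk'i)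
      rw [hc]; exact All j i hj hi
end
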